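/- Let V be a finite-dimensional real inner product space with dim V = n, and let C : V × V → ℝ be a symmetric bilinear form. Suppose that for all X, Z, Y, W ∈ V the expression ⟨C(Z,Y)X − C(X,Y)Z, W⟩ is symmetric under exchanging Y and W, i.e. ⟨C(Z,Y)X − C(X,Y)Z, W⟩ = ⟨Y, C(Z,W)X − C(X,W)Z⟩. Then (tr_g C)·⟨X,W⟩ + (n−2)·C(X,W) = 0 for all X, W, where tr_g C = ∑ᵢ C(Zᵢ,Zᵢ) for any orthonormal basis (Zᵢ). -/

import Mathlib

open scoped InnerProductSpace

theorem OrthonormalBasis.sum_inner_smul_map {ι 𝕜 E M : Type*} [Fintype ι] [RCLike 𝕜]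
    [NormedAddCommGroup E] [InnerProductSpace 𝕜 E] [AddCommMonoid M] [Module 𝕜 M]
    (b : OrthonormalBasis ι 𝕜 E) (f : E →ₗ[𝕜] M) (v : E) :
    ∑ i, ⟪b i, v⟫_𝕜 • f (b i) = f v := by
  conv_rhs => rw [← b.sum_repr' v]
  simp only [map_sum, map_smul]

theorem OrthonormalBasis.sum_inner_self {ι 𝕜 E : Type*} [Fintype ι] [RCLike 𝕜]
    [NormedAddCommGroup E] [InnerProductSpace 𝕜 E] (b : OrthonormalBasis ι 𝕜 E) :
    ∑ i, ⟪b i, b i⟫_𝕜 = Fintype.card ι := by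
  simp [inner_self_eq_norm_sq_to_K, b.orthonormal.1]

theorem stmt0_general {V : Type*} [NormedAddCommGroup V] [InnerProductSpace ℝ V]
    (n : ℕ)
    (C : V →ₗ[ℝ] V →ₗ[ℝ] ℝ)
    (hsym : ∀ X Z Y W : V,
      (inner ℝ (C Z Y • X - C X Y • Z) W : ℝ) = inner ℝ Y (C Z W • X - C X W • Z))
    (b : OrthonormalBasis (Fin n) ℝ V) (X W : V) :
    (∑ i, C (b i) (b i)) * (inner ℝ X W : ℝ) + ((n : ℝ) - 2) * C X W = 0 := by
  have hscalar : ∀ Z Y : V, C Z Y * ⟪X, W⟫_ℝ - C X Y * ⟪Z, W⟫_ℝ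
      = C Z W * ⟪Y, X⟫_ℝ - C X W * ⟪Y, Z⟫_ℝ := fun Z Y => by
    simpa only [inner_sub_left, inner_sub_right, real_inner_smul_left, real_inner_smul_right]
      using hsym X Z Y W
  have htrace := Finset.sum_congr rfl fun i (_ : i ∈ Finset.univ) => hscalar (b i) (b i)
  have hX : ∑ i, C X (b i) * ⟪b i, W⟫_ℝ = C X W := by
    simpa only [smul_eq_mul, mul_comm] using b.sum_inner_smul_map (C X) W
  have hW : ∑ i, C (b i) W * ⟪b i, X⟫_ℝ = C X W := by
    simpa only [smul_eq_mul, mul_comm, LinearMap.flip_apply]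
      using b.sum_inner_smul_map (C.flip W) X
  simp only [Finset.sum_sub_distrib, ← Finset.sum_mul, ← Finset.mul_sum, hX, hW,
    b.sum_inner_self, Fintype.card_fin] at htrace
  linarith

/-- Tracing identity for the symmetric bilinear form C (Lemma 2.5 key computation). -/
theorem stmt0 {V : Type*} [NormedAddCommGroup V] [InnerProductSpace ℝ V]
    (n : ℕ) (hn : Module.finrank ℝ V = n)
    (C : V →ₗ[ℝ] V →ₗ[ℝ] ℝ)
    (hCsym : ∀ X Z : V, C X Z = C Z X)
    (hsym : ∀ X Z Y W : V,
      (inner ℝ (C Z Y • X - C X Y • Z) W : ℝ) = inner ℝ Y (C Z W • X - C X W • Z))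
    (b : OrthonormalBasis (Fin n) ℝ V) (X W : V) :
    (∑ i, C (b i) (b i)) * (inner ℝ X W : ℝ) + ((n : ℝ) - 2) * C X W = 0 :=
  stmt0_general n C hsym b X W
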